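/- Let t ∈ {1,…,n} with t ≠ p and Δ = |p−t| > 0. Then the pointwise-influences and max-influence about X_p satisfy i(X_p⇝X_t=0) = i_low(Δ), i(X_p⇝X_t=1) = i_high(Δ), and I(X_p⇝X_t) = i_high(Δ). -/
import Mathlib


open Finset
open scoped Classical

noncomputable section

/-- Transition matrix of the two-state Markov chain:
`transP α β i j = Pr(X_{t+1} = j | X_t = i)` with `false ↔ 0`, `true ↔ 1`. -/
def transP (α β : ℝ) : Bool → Bool → ℝ
  | false, false => 1 - α
  | false, true  => α
  | true,  false => β
  | true,  true  => 1 - β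

/-- Stationary distribution of the chain. -/
def statDist (α β : ℝ) : Bool → ℝ
  | false => β / (α + β)
  | true  => α / (α + β)

/-- Joint pmf of the stationary Markov chain `X_1, …, X_n` (0-indexed in Lean). -/
def jointX (α β : ℝ) {n : ℕ} (x : Fin n → Bool) : ℝ :=
  if h : 0 < n then
    statDist α β (x ⟨0, h⟩) *
      ∏ i : Fin (n - 1),
        transP α β (x ⟨i.1, by have := i.2; omega⟩) (x ⟨i.1 + 1, by have := i.2; omega⟩)
  else 1

/-- Probability of an event under the chain. -/
def prX (α β : ℝ) {n : ℕ} (E : Set (Fin n → Bool)) : ℝ :=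
  ∑ x : Fin n → Bool, E.indicator (jointX α β) x

/-- Conditional probability of the event `E` given the event `C`. -/
def condProb (α β : ℝ) {n : ℕ} (E C : Set (Fin n → Bool)) : ℝ :=
  prX α β (E ∩ C) / prX α β C

/-- `log (a / b)` valued in the extended reals: `⊥` when `a = 0` and
`⊤` when `a > 0 = b` (ratios of probabilities, so nonnegative inputs). -/
def logRatio (a b : ℝ) : EReal :=
  if a ≤ 0 then ⊥ else if b ≤ 0 then ⊤ else ((Real.log (a / b) : ℝ) : EReal)

/-- Pointwise influence `i(X_p ⇝ X_S = g_S)`. -/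
def pwInfl (α β : ℝ) {n : ℕ} (p : Fin n) (S : Finset (Fin n)) (g : Fin n → Bool) : EReal :=
  max
    (logRatio (condProb α β {x | ∀ t ∈ S, x t = g t} {x | x p = true})
              (condProb α β {x | ∀ t ∈ S, x t = g t} {x | x p = false}))
    (logRatio (condProb α β {x | ∀ t ∈ S, x t = g t} {x | x p = false})
              (condProb α β {x | ∀ t ∈ S, x t = g t} {x | x p = true}))

/-- Pointwise influence on a single record: `i(X_p ⇝ X_t = b)`. -/
def pwInfl1 (α β : ℝ) {n : ℕ} (p t : Fin n) (b : Bool) : EReal :=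
  pwInfl α β p {t} (fun _ => b)

/-- Max-influence `I(X_p ⇝ X_S)`. -/
def maxInfl (α β : ℝ) {n : ℕ} (p : Fin n) (S : Finset (Fin n)) : EReal :=
  ⨆ g : Fin n → Bool, pwInfl α β p S g

/-- Kernel of a local redaction mechanism with redaction probabilities
`r t x = Pr(Y_t = ⊥ | X_t = x)`: probability of the output `y` given the data `x`
(`none` encodes the erasure symbol `⊥`). -/
def mechK {n : ℕ} (r : Fin n → Bool → ℝ) (x : Fin n → Bool) (y : Fin n → Option Bool) : ℝ :=
  ∏ t, (y t).elim (r t (x t)) (fun b => if b = x t then 1 - r t (x t) else 0)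

/-- The redaction probabilities are genuine probabilities. -/
def validMech {n : ℕ} (r : Fin n → Bool → ℝ) : Prop :=
  ∀ t x, 0 ≤ r t x ∧ r t x ≤ 1

/-- Data-independent mechanism: the redaction probability does not depend on the data. -/
def dataIndep {n : ℕ} (r : Fin n → Bool → ℝ) : Prop :=
  ∀ t, r t false = r t true

/-- Joint probability `Pr(X ∈ E, Y ∈ F)`. -/
def prXY (α β : ℝ) {n : ℕ} (r : Fin n → Bool → ℝ) (E : Set (Fin n → Bool))
    (F : Set (Fin n → Option Bool)) : ℝ :=
  ∑ x : Fin n → Bool, ∑ y : Fin n → Option Bool,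
    E.indicator (jointX α β) x * F.indicator (mechK r x) y

/-- Output probability `Pr(Y ∈ F)`. -/
def prY (α β : ℝ) {n : ℕ} (r : Fin n → Bool → ℝ) (F : Set (Fin n → Option Bool)) : ℝ :=
  prXY α β r Set.univ F

/-- Conditional output probability `Pr(Y ∈ F | X_p = a)`. -/
def condY (α β : ℝ) {n : ℕ} (r : Fin n → Bool → ℝ) (p : Fin n) (a : Bool)
    (F : Set (Fin n → Option Bool)) : ℝ :=
  prXY α β r {x | x p = a} F / prX α β {x | x p = a}

/-- Privacy leakage `L(X_p → Y_T)` of the marginal output on the index set `T`: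
`log sup_{y_T ∈ supp, a} Pr(Y_T = y_T | X_p = a)/Pr(Y_T = y_T | X_p = ¬a)`. -/
def leakOn (α β : ℝ) {n : ℕ} (r : Fin n → Bool → ℝ) (p : Fin n) (T : Finset (Fin n)) : EReal :=
  ⨆ g : Fin n → Option Bool, ⨆ a : Bool,
    logRatio (condY α β r p a {y | ∀ t ∈ T, y t = g t})
             (condY α β r p (!a) {y | ∀ t ∈ T, y t = g t})

/-- Privacy leakage `L(X_p → Y)`. -/
def leak (α β : ℝ) {n : ℕ} (r : Fin n → Bool → ℝ) (p : Fin n) : EReal :=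
  leakOn α β r p univ

/-- Utility: expected fraction of correctly released records. -/
def utility (α β : ℝ) {n : ℕ} (r : Fin n → Bool → ℝ) : ℝ :=
  (1 / (n : ℝ)) * ∑ x : Fin n → Bool, ∑ y : Fin n → Option Bool,
    jointX α β x * mechK r x y * ∑ t, (if y t = some (x t) then (1 : ℝ) else 0)

/-- Large-leakage region `R_{L|ε'}`. -/
def regL (α β : ℝ) {n : ℕ} (p : Fin n) (ε' : ℝ) : Finset (Fin n) :=
  univ.filter fun t =>
    (ε' : EReal) < pwInfl1 α β p t false ∧ pwInfl1 α β p t false ≤ pwInfl1 α β p t true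

/-- Medium-leakage region `R_{M|ε'}`. -/
def regM (α β : ℝ) {n : ℕ} (p : Fin n) (ε' : ℝ) : Finset (Fin n) :=
  univ.filter fun t =>
    pwInfl1 α β p t false ≤ (ε' : EReal) ∧ (ε' : EReal) < pwInfl1 α β p t true

/-- Small-leakage region `R_{S|ε'}`. -/
def regS (α β : ℝ) {n : ℕ} (p : Fin n) (ε' : ℝ) : Finset (Fin n) :=
  univ.filter fun t =>
    pwInfl1 α β p t false ≤ pwInfl1 α β p t true ∧ pwInfl1 α β p t true ≤ (ε' : EReal)

/-- `Q^{(ℓ)}`: elements of `Q` left of `p` (inclusive). -/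
def leftOf {n : ℕ} (p : Fin n) (Q : Finset (Fin n)) : Finset (Fin n) := Q.filter (· ≤ p)

/-- `Q^{(r)}`: elements of `Q` right of `p` (inclusive). -/
def rightOf {n : ℕ} (p : Fin n) (Q : Finset (Fin n)) : Finset (Fin n) := Q.filter (p ≤ ·)

/-- The region `S = R_{S|ε_ℓ}^{(ℓ)} ∪ R_{S|ε_r}^{(r)}` of a 3R mechanism. -/
def set3S (α β : ℝ) {n : ℕ} (p : Fin n) (εl εr : ℝ) : Finset (Fin n) :=
  leftOf p (regS α β p εl) ∪ rightOf p (regS α β p εr)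

/-- The region `M = R_{M|ε_ℓ}^{(ℓ)} ∪ R_{M|ε_r}^{(r)}` of a 3R mechanism. -/
def set3M (α β : ℝ) {n : ℕ} (p : Fin n) (εl εr : ℝ) : Finset (Fin n) :=
  leftOf p (regM α β p εl) ∪ rightOf p (regM α β p εr)

/-- The region `L = R_{L|ε_ℓ}^{(ℓ)} ∪ R_{L|ε_r}^{(r)}` of a 3R mechanism. -/
def set3L (α β : ℝ) {n : ℕ} (p : Fin n) (εl εr : ℝ) : Finset (Fin n) :=
  leftOf p (regL α β p εl) ∪ rightOf p (regL α β p εr)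

/-- `r` is the 3R mechanism with regions `S`, `M`, `L` and redaction parameters `q`. -/
def is3R {n : ℕ} (r : Fin n → Bool → ℝ) (S M L : Finset (Fin n)) (q : Fin n → ℝ) : Prop :=
  ∀ t, (t ∈ L → ∀ x, r t x = 1) ∧ (t ∈ S → ∀ x, r t x = 0) ∧
    (t ∈ M → r t false = q t ∧ r t true = 1)

/-- Closed form `i_low(Δ)`. -/
def iLow (α β : ℝ) (Δ : ℕ) : ℝ :=
  |Real.log ((1 + (α / β) * (1 - α - β) ^ Δ) / (1 - (1 - α - β) ^ Δ))|

/-- Closed form `i_high(Δ)`. -/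
def iHigh (α β : ℝ) (Δ : ℕ) : ℝ :=
  |Real.log ((1 + (β / α) * (1 - α - β) ^ Δ) / (1 - (1 - α - β) ^ Δ))|

def qpow (α β : ℝ) : ℕ → Bool → Bool → ℝ
  | 0, a, b => if a = b then 1 else 0
  | (Δ+1), a, b => ∑ c, qpow α β Δ a c * transP α β c b

lemma transP_row_sum (α β : ℝ) (c : Bool) : ∑ b, transP α β c b = 1 := by
  cases c <;> simp [transP]

lemma jointX_succ (α β : ℝ) {m : ℕ} (x : Fin (m+1) → Bool) :
    jointX α β x = statDist α β (x 0) *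
      ∏ i : Fin m, transP α β (x i.castSucc) (x i.succ) := by
  rw [jointX, dif_pos (Nat.succ_pos m)]; rfl

lemma jointX_one (α β : ℝ) (x : Fin 1 → Bool) : jointX α β x = statDist α β (x 0) := by
  rw [jointX_succ]; simp

lemma jointX_snoc (α β : ℝ) {m : ℕ} (x : Fin (m+1) → Bool) (b : Bool) :
    jointX α β (Fin.snoc x b : Fin (m+2) → Bool)
      = jointX α β x * transP α β (x (Fin.last m)) b := by
  rw [jointX_succ, jointX_succ, Fin.prod_univ_castSucc]
  simp only [Fin.snoc_castSucc, Fin.snoc_last, Fin.succ_castSucc, Fin.succ_last]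
  rw [show (0 : Fin (m+2)) = Fin.castSucc 0 from rfl, Fin.snoc_castSucc]; ring

lemma sum_snoc {m : ℕ} (f : (Fin (m+1) → Bool) → ℝ) :
    ∑ x : Fin (m+1) → Bool, f x = ∑ y : Fin m → Bool, ∑ b : Bool, f (Fin.snoc y b) := by
  rw [← Equiv.sum_comp (Fin.snocEquiv (fun _ => Bool)) f, Fintype.sum_prod_type,
    Finset.sum_comm]
  rfl

lemma snoc_at {m : ℕ} (y : Fin (m+1) → Bool) (b : Bool) (k : ℕ) (hk : k < m+1) (hk2 : k < m+2) :
    (Fin.snoc y b : Fin (m+2) → Bool) ⟨k, hk2⟩ = y ⟨k, hk⟩ := by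
  rw [show (⟨k, hk2⟩ : Fin (m+2)) = Fin.castSucc ⟨k, hk⟩ from rfl, Fin.snoc_castSucc]

lemma snoc_at_last {m : ℕ} (y : Fin (m+1) → Bool) (b : Bool) (hk2 : m+1 < m+2) :
    (Fin.snoc y b : Fin (m+2) → Bool) ⟨m+1, hk2⟩ = b := by
  rw [show (⟨m+1, hk2⟩ : Fin (m+2)) = Fin.last (m+1) from rfl, Fin.snoc_last]

lemma marg (α β : ℝ) (hs : α + β ≠ 0) :
    ∀ (m : ℕ) (k : ℕ) (hk : k < m) (F : Bool → ℝ),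
    ∑ x : Fin m → Bool, jointX α β x * F (x ⟨k, hk⟩)
      = ∑ a, statDist α β a * F a := by
  intro m
  induction m with
  | zero => intro k hk; omega
  | succ m ih =>
    intro k hk F
    cases m with
    | zero =>
      have hk0 : k = 0 := by omega
      subst hk0
      rw [← Equiv.sum_comp (Equiv.funUnique (Fin 1) Bool).symm
        (fun x => jointX α β x * F (x ⟨0, hk⟩))]
      simp [jointX_one]
    | succ m' =>
      rw [sum_snoc]
      by_cases hk' : k < m' + 1
      · have step : ∀ y : Fin (m'+1) → Bool,
            ∑ b : Bool, jointX α β (Fin.snoc y b)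
                * F ((Fin.snoc y b : Fin (m'+2) → Bool) ⟨k, hk⟩)
              = jointX α β y * F (y ⟨k, hk'⟩) := by
          intro y
          simp only [jointX_snoc, snoc_at y _ k hk' hk]
          rw [← Finset.sum_mul, ← Finset.mul_sum, transP_row_sum]; ring
        rw [Finset.sum_congr rfl fun y _ => step y]
        exact ih k hk' F
      · have hk0 : k = m' + 1 := by omega
        subst hk0
        have step : ∀ y : Fin (m'+1) → Bool,
            ∑ b : Bool, jointX α β (Fin.snoc y b)
                * F ((Fin.snoc y b : Fin (m'+2) → Bool) ⟨m'+1, hk⟩)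
              = jointX α β y * ∑ b, transP α β (y ⟨m', Nat.lt_succ_self m'⟩) b * F b := by
          intro y
          simp only [jointX_snoc, snoc_at_last y _ hk, Finset.mul_sum]
          exact Finset.sum_congr rfl fun b _ => by
            rw [show Fin.last m' = ⟨m', Nat.lt_succ_self m'⟩ from rfl]; ring
        rw [Finset.sum_congr rfl fun y _ => step y,
          ih m' (Nat.lt_succ_self m') (fun c => ∑ b, transP α β c b * F b)]
        simp only [Fintype.sum_bool, statDist, transP]
        field_simp
        ring

lemma pair (α β : ℝ) (hs : α + β ≠ 0) :
    ∀ (m : ℕ) (i j : ℕ) (hij : i ≤ j) (hi : i < m) (hj : j < m) (H : Bool → Bool → ℝ),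
    ∑ x : Fin m → Bool, jointX α β x * H (x ⟨i, hi⟩) (x ⟨j, hj⟩)
      = ∑ a, ∑ b, statDist α β a * qpow α β (j - i) a b * H a b := by
  intro m
  induction m with
  | zero => intro i j hij hi hj; omega
  | succ m ih =>
    intro i j hij hi hj H
    by_cases hj' : j < m
    · cases m with
      | zero => omega
      | succ m' =>
        rw [sum_snoc]
        have hi' : i < m' + 1 := by omega
        have step : ∀ y : Fin (m'+1) → Bool,
            ∑ b : Bool, jointX α β (Fin.snoc y b)
                * H ((Fin.snoc y b : Fin (m'+2) → Bool) ⟨i, hi⟩)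
                    ((Fin.snoc y b : Fin (m'+2) → Bool) ⟨j, hj⟩)
              = jointX α β y * H (y ⟨i, hi'⟩) (y ⟨j, hj'⟩) := by
          intro y
          simp only [jointX_snoc, snoc_at y _ i hi' hi, snoc_at y _ j hj' hj]
          rw [← Finset.sum_mul, ← Finset.mul_sum, transP_row_sum]; ring
        rw [Finset.sum_congr rfl fun y _ => step y]
        exact ih i j hij hi' hj' H
    · by_cases hii : i = j
      · subst hii
        have hmarg := marg α β hs (m+1) i hi (fun a => H a a)
        calc ∑ x : Fin (m+1) → Bool, jointX α β x * H (x ⟨i, hi⟩) (x ⟨i, hj⟩)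
            = ∑ a, statDist α β a * H a a := hmarg
          _ = ∑ a, ∑ b, statDist α β a * qpow α β (i - i) a b * H a b := by
              rw [Nat.sub_self]
              simp only [Fintype.sum_bool, qpow]
              norm_num
      · have hjm : j = m := by omega
        cases m with
        | zero => omega
        | succ m' =>
          subst hjm
          rw [sum_snoc]
          have hi' : i < m' + 1 := by omega
          have step : ∀ y : Fin (m'+1) → Bool,
              ∑ b : Bool, jointX α β (Fin.snoc y b)
                  * H ((Fin.snoc y b : Fin (m'+2) → Bool) ⟨i, hi⟩)
                      ((Fin.snoc y b : Fin (m'+2) → Bool) ⟨m'+1, hj⟩)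
                = jointX α β y *
                    (fun a c => ∑ b, transP α β c b * H a b) (y ⟨i, hi'⟩)
                      (y ⟨m', Nat.lt_succ_self m'⟩) := by
            intro y
            simp only [jointX_snoc, snoc_at y _ i hi' hi, snoc_at_last y _ hj, Finset.mul_sum]
            exact Finset.sum_congr rfl fun b _ => by
              rw [show Fin.last m' = ⟨m', Nat.lt_succ_self m'⟩ from rfl]; ring
          rw [Finset.sum_congr rfl fun y _ => step y,
            ih i m' (by omega) hi' (Nat.lt_succ_self m')
              (fun a c => ∑ b, transP α β c b * H a b)]
          have hq : m' + 1 - i = (m' - i) + 1 := by omega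
          rw [hq]
          simp only [qpow, Fintype.sum_bool]
          ring

section Closed
variable {α β : ℝ} (hα : 0 < α) (hαβ : α ≤ β) (hβ : β < 1)

lemma qpow_closed (hα : 0 < α) (hβ' : 0 < β) (Δ : ℕ) :
    qpow α β Δ false false = (β + α * (1-α-β)^Δ) / (α+β) ∧
    qpow α β Δ false true = α * (1 - (1-α-β)^Δ) / (α+β) ∧
    qpow α β Δ true false = β * (1 - (1-α-β)^Δ) / (α+β) ∧
    qpow α β Δ true true = (α + β * (1-α-β)^Δ) / (α+β) := by
  have hs : α + β ≠ 0 := by positivity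
  induction Δ with
  | zero => norm_num [qpow]; constructor <;> (field_simp <;> ring)
  | succ Δ ihq =>
    obtain ⟨h1, h2, h3, h4⟩ := ihq
    refine ⟨?_, ?_, ?_, ?_⟩ <;>
      (simp only [qpow, Fintype.sum_bool, h1, h2, h3, h4, transP, pow_succ];
       field_simp; ring)

lemma lam_abs (hα : 0 < α) (hαβ : α ≤ β) (hβ : β < 1) {Δ : ℕ} (hΔ : 1 ≤ Δ) :
    |(1-α-β)^Δ| ≤ |1-α-β| ∧ |1-α-β| < 1 := by
  have h1 : |1-α-β| < 1 := by
    rw [abs_lt]; constructor <;> nlinarith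
  refine ⟨?_, h1⟩
  rw [abs_pow]
  calc |1-α-β|^Δ ≤ |1-α-β|^1 :=
        pow_le_pow_of_le_one (abs_nonneg _) h1.le hΔ
    _ = |1-α-β| := pow_one _

lemma qpow_denoms (hα : 0 < α) (hαβ : α ≤ β) (hβ : β < 1) {Δ : ℕ} (hΔ : 1 ≤ Δ) :
    0 < 1 - (1-α-β)^Δ ∧ 0 < β + α * (1-α-β)^Δ ∧ 0 < α + β * (1-α-β)^Δ := by
  obtain ⟨hpl, hl1⟩ := lam_abs hα hαβ hβ hΔ
  have hb : |(1-α-β)^Δ| < 1 := lt_of_le_of_lt hpl hl1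
  rw [abs_lt] at hb
  refine ⟨by linarith [hb.2], by nlinarith [hb.1], ?_⟩
  rcases le_or_gt 0 ((1-α-β)^Δ) with h | h
  · nlinarith
  · have hl : 1 - α - β < 0 := by
      by_contra hcon
      push_neg at hcon
      exact absurd (pow_nonneg hcon Δ) (not_le.2 h)
    have habs : |1-α-β| = α + β - 1 := by rw [abs_of_neg hl]; ring
    have : β * |(1-α-β)^Δ| ≤ β * (α + β - 1) := by
      rw [← habs]; exact mul_le_mul_of_nonneg_left hpl (by linarith)
    have h2 : β * (α+β-1) < α := by nlinarith
    have h3 : (1-α-β)^Δ ≥ -|(1-α-β)^Δ| := neg_abs_le _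
    nlinarith [abs_nonneg ((1-α-β)^Δ)]

lemma qpow_pos (hα : 0 < α) (hαβ : α ≤ β) (hβ : β < 1) {Δ : ℕ} (hΔ : 1 ≤ Δ) (a b : Bool) :
    0 < qpow α β Δ a b := by
  have hβ' : 0 < β := lt_of_lt_of_le hα hαβ
  obtain ⟨c1, c2, c3, c4⟩ := qpow_closed hα hβ' Δ
  obtain ⟨d1, d2, d3⟩ := qpow_denoms hα hαβ hβ hΔ
  have hs : 0 < α + β := by positivity
  cases a <;> cases b <;> simp only [c1, c2, c3, c4] <;> positivity

lemma qpow_rev (hα : 0 < α) (hβ' : 0 < β) (Δ : ℕ) (a b : Bool) :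
    statDist α β a * qpow α β Δ a b = statDist α β b * qpow α β Δ b a := by
  obtain ⟨c1, c2, c3, c4⟩ := qpow_closed hα hβ' Δ
  have hs : α + β ≠ 0 := by positivity
  cases a <;> cases b <;> simp only [c1, c2, c3, c4, statDist] <;> field_simp <;> ring
end Closed



lemma prX_single (α β : ℝ) (hs : α + β ≠ 0) {n : ℕ} (p : Fin n) (a : Bool) :
    prX α β {x | x p = a} = statDist α β a := by
  unfold prX
  have key : ∀ x : Fin n → Bool,
      ({x : Fin n → Bool | x p = a}).indicator (jointX α β) x
        = jointX α β x * (if x p = a then 1 else 0) := fun x => by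
    by_cases h : x p = a <;> simp [Set.indicator_apply, h]
  rw [Finset.sum_congr rfl fun x _ => key x]
  have hm := marg α β hs n p.1 p.2 (fun c => if c = a then 1 else 0)
  rw [show (⟨p.1, p.2⟩ : Fin n) = p from rfl] at hm
  rw [hm]
  cases a <;> simp [Fintype.sum_bool]

lemma prX_pair (α β : ℝ) (hs : α + β ≠ 0) {n : ℕ} (i j : Fin n) (hij : i.1 < j.1)
    (a b : Bool) :
    prX α β {x | x i = a ∧ x j = b} = statDist α β a * qpow α β (j.1 - i.1) a b := by
  unfold prX
  have key : ∀ x : Fin n → Bool,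
      ({x : Fin n → Bool | x i = a ∧ x j = b}).indicator (jointX α β) x
        = jointX α β x * ((if x i = a then 1 else 0) * (if x j = b then 1 else 0)) :=
    fun x => by
      by_cases h1 : x i = a <;> by_cases h2 : x j = b <;>
        simp [Set.indicator_apply, h1, h2]
  rw [Finset.sum_congr rfl fun x _ => key x]
  have hp := pair α β hs n i.1 j.1 hij.le i.2 j.2
    (fun c d => (if c = a then 1 else 0) * (if d = b then 1 else 0))
  rw [show (⟨i.1, i.2⟩ : Fin n) = i from rfl, show (⟨j.1, j.2⟩ : Fin n) = j from rfl] at hp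
  rw [hp]
  cases a <;> cases b <;> simp [Fintype.sum_bool]

lemma condProb_single (α β : ℝ) (hα : 0 < α) (hαβ : α ≤ β) (hβ : β < 1)
    {n : ℕ} (p t : Fin n) (htp : t ≠ p) (a bb : Bool) :
    condProb α β {x | x t = bb} {x | x p = a}
      = qpow α β (max (p.1 - t.1) (t.1 - p.1)) a bb := by
  have hβ' : 0 < β := lt_of_lt_of_le hα hαβ
  have hs : α + β ≠ 0 := by positivity
  have hsd : statDist α β a ≠ 0 := by cases a <;> simp [statDist] <;> constructor <;> positivity
  have hv : t.1 ≠ p.1 := fun h => htp (Fin.val_injective h)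
  unfold condProb
  rw [prX_single α β hs p a]
  rcases lt_or_gt_of_ne hv with h | h
  · -- t < p : Δ = p - t
    have hmax : max (p.1 - t.1) (t.1 - p.1) = p.1 - t.1 := by omega
    have hset : ({x : Fin n → Bool | x t = bb} ∩ {x | x p = a})
        = {x | x t = bb ∧ x p = a} := by ext x; simp [Set.mem_inter_iff]
    rw [hset, prX_pair α β hs t p h bb a, hmax, qpow_rev hα hβ' _ bb a, mul_comm]
    field_simp
  · -- p < t : Δ = t - p
    have hmax : max (p.1 - t.1) (t.1 - p.1) = t.1 - p.1 := by omega
    have hset : ({x : Fin n → Bool | x t = bb} ∩ {x | x p = a})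
        = {x | x p = a ∧ x t = bb} := by ext x; simp [Set.mem_inter_iff, and_comm]
    rw [hset, prX_pair α β hs p t h a bb, hmax, mul_comm]
    field_simp







lemma logRatio_max {u v : ℝ} (hu : 0 < u) (hv : 0 < v) :
    max (logRatio u v) (logRatio v u) = ((|Real.log (u / v)| : ℝ) : EReal) := by
  rw [logRatio, if_neg (not_le.2 hu), if_neg (not_le.2 hv),
      logRatio, if_neg (not_le.2 hv), if_neg (not_le.2 hu)]
  have h1 : Real.log (v / u) = -Real.log (u / v) := by
    rw [← Real.log_inv, inv_div]
  rw [h1, abs_eq_max_neg]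
  exact (EReal.coe_strictMono.monotone.map_max).symm

lemma singleton_set {n : ℕ} (t : Fin n) (g : Fin n → Bool) :
    {x : Fin n → Bool | ∀ s ∈ ({t} : Finset (Fin n)), x s = g s} = {x | x t = g t} := by
  ext x; simp

lemma pwInfl_singleton (α β : ℝ) {n : ℕ} (p t : Fin n) (g : Fin n → Bool) :
    pwInfl α β p {t} g = pwInfl1 α β p t (g t) := by
  unfold pwInfl1 pwInfl
  rw [singleton_set t g, singleton_set t (fun _ => g t)]

lemma pwInfl1_eval {α β : ℝ} (hα : 0 < α) (hαβ : α ≤ β) (hβ : β < 1)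
    {n : ℕ} (p t : Fin n) (htp : t ≠ p) (bb : Bool) :
    pwInfl1 α β p t bb =
      ((|Real.log (qpow α β (max (p.1 - t.1) (t.1 - p.1)) true bb /
          qpow α β (max (p.1 - t.1) (t.1 - p.1)) false bb)| : ℝ) : EReal) := by
  have hΔ : 1 ≤ max (p.1 - t.1) (t.1 - p.1) := by
    have : t.1 ≠ p.1 := fun h => htp (Fin.val_injective h)
    omega
  unfold pwInfl1 pwInfl
  rw [singleton_set t (fun _ => bb)]
  rw [condProb_single α β hα hαβ hβ p t htp true bb,
      condProb_single α β hα hαβ hβ p t htp false bb]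
  exact logRatio_max (qpow_pos hα hαβ hβ hΔ true bb) (qpow_pos hα hαβ hβ hΔ false bb)

lemma low_le_high {α β : ℝ} (hα : 0 < α) (hαβ : α ≤ β) (hβ : β < 1)
    {Δ : ℕ} (hΔ : 1 ≤ Δ) : iLow α β Δ ≤ iHigh α β Δ := by
  have hβ' : 0 < β := lt_of_lt_of_le hα hαβ
  obtain ⟨d1, d2, d3⟩ := qpow_denoms hα hαβ hβ hΔ
  unfold iLow iHigh
  set u := (1 - α - β) ^ Δ with hu
  have hL : 0 < 1 + α / β * u := by
    have : 1 + α / β * u = (β + α * u) / β := by field_simp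
    rw [this]; positivity
  have hH : 0 < 1 + β / α * u := by
    have : 1 + β / α * u = (α + β * u) / α := by field_simp
    rw [this]; positivity
  have hdiv : α / β ≤ β / α := by
    rw [div_le_div_iff₀ hβ' hα]; nlinarith
  rcases le_or_gt 0 u with h | h
  · have hnum : 1 + α / β * u ≤ 1 + β / α * u := by nlinarith
    have h1 : 1 ≤ (1 + α / β * u) / (1 - u) := by
      rw [le_div_iff₀ d1]
      have : 0 ≤ α / β * u := by positivity
      nlinarith
    have h2 : (1 + α / β * u) / (1 - u) ≤ (1 + β / α * u) / (1 - u) := by gcongr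
    rw [abs_of_nonneg (Real.log_nonneg h1), abs_of_nonneg (Real.log_nonneg (h1.trans h2))]
    exact Real.log_le_log (by positivity) h2
  · have hnum : 1 + β / α * u ≤ 1 + α / β * u := by nlinarith
    have h2 : (1 + β / α * u) / (1 - u) ≤ (1 + α / β * u) / (1 - u) := by gcongr
    have h1 : (1 + α / β * u) / (1 - u) ≤ 1 := by
      rw [div_le_one d1]
      have h3 : α / β * u ≤ 0 := mul_nonpos_of_nonneg_of_nonpos (by positivity) h.le
      have h4 : 0 < α / β := by positivity
      nlinarith
    rw [abs_of_nonpos (Real.log_nonpos (by positivity) h1),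
        abs_of_nonpos (Real.log_nonpos (by positivity) (h2.trans h1))]
    exact neg_le_neg (Real.log_le_log (by positivity) h2)


/-- For a single record `X_t` with `t ≠ p` at distance `Δ = |p − t|`,
the pointwise-influences are `i(X_p ⇝ X_t = 0) = i_low(Δ)`, `i(X_p ⇝ X_t = 1) = i_high(Δ)`,
and the max-influence is `I(X_p ⇝ X_t) = i_high(Δ)`. -/
theorem statement9 {n : ℕ} (hn : 1 ≤ n) (p t : Fin n) (htp : t ≠ p)
    (α β : ℝ) (hα : 0 < α) (hαβ : α ≤ β) (hβ : β < 1) :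
    pwInfl1 α β p t false = ((iLow α β (max (p.1 - t.1) (t.1 - p.1)) : ℝ) : EReal) ∧
    pwInfl1 α β p t true = ((iHigh α β (max (p.1 - t.1) (t.1 - p.1)) : ℝ) : EReal) ∧
    maxInfl α β p {t} = ((iHigh α β (max (p.1 - t.1) (t.1 - p.1)) : ℝ) : EReal) := by
  have hβ' : 0 < β := lt_of_lt_of_le hα hαβ
  have hs : (α : ℝ) + β ≠ 0 := by positivity
  set Δ := max (p.1 - t.1) (t.1 - p.1) with hΔdef
  have hΔ : 1 ≤ Δ := by
    have : t.1 ≠ p.1 := fun h => htp (Fin.val_injective h)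
    omega
  obtain ⟨c1, c2, c3, c4⟩ := qpow_closed hα hβ' Δ
  obtain ⟨d1, d2, d3⟩ := qpow_denoms hα hαβ hβ hΔ
  have e_false : pwInfl1 α β p t false = ((iLow α β Δ : ℝ) : EReal) := by
    rw [pwInfl1_eval hα hαβ hβ p t htp false]
    congr 1
    have hq : qpow α β Δ false false / qpow α β Δ true false
        = (1 + α / β * (1 - α - β) ^ Δ) / (1 - (1 - α - β) ^ Δ) := by
      rw [c1, c3]
      rw [div_div_div_cancel_right₀ hs]
      field_simp
    have hflip : qpow α β Δ true false / qpow α β Δ false false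
        = (qpow α β Δ false false / qpow α β Δ true false)⁻¹ := (inv_div _ _).symm
    rw [hflip, Real.log_inv, abs_neg, hq, iLow]
  have e_true : pwInfl1 α β p t true = ((iHigh α β Δ : ℝ) : EReal) := by
    rw [pwInfl1_eval hα hαβ hβ p t htp true]
    congr 1
    have hq : qpow α β Δ true true / qpow α β Δ false true
        = (1 + β / α * (1 - α - β) ^ Δ) / (1 - (1 - α - β) ^ Δ) := by
      rw [c4, c2]
      rw [div_div_div_cancel_right₀ hs]
      field_simp
    rw [hq, iHigh]
  refine ⟨e_false, e_true, ?_⟩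
  apply le_antisymm
  · apply iSup_le
    intro g
    rw [pwInfl_singleton α β p t g]
    cases hg : g t
    · rw [e_false]
      exact EReal.coe_le_coe_iff.2 (low_le_high hα hαβ hβ hΔ)
    · rw [e_true]
  · calc ((iHigh α β Δ : ℝ) : EReal) = pwInfl α β p {t} (fun _ => true) := by
          rw [pwInfl_singleton α β p t (fun _ => true), ← e_true]
      _ ≤ ⨆ g, pwInfl α β p {t} g := le_iSup _ _
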